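/- Let L^♯ = L^♯_H + L^♯_D where L^♯_H = i[H,·] and L^♯_D is self-adjoint and adjoint-preserving with respect to the inner product ⟨⟨A,B⟩⟩_s = Tr[Σ^{1−s}A†Σ^s B] with Σ = ρ_{β_f} the Gibbs state of H. Suppose L^♯_D maps each diagonal projector |n⟩⟨n| into the span of {|m⟩⟨m|}. Then for every τ ≥ 0, e^{τL^♯}[|n⟩⟨n|] = e^{τL^♯_D}[|n⟩⟨n|], and consequently ⟨m|e^{τL^♯}[|n⟩⟨n|]|m⟩ = e^{-β_f(E_n−E_m)}⟨n|e^{τL^♯}[|m⟩⟨m|]|n⟩ for all m, n, τ (so the quantum fluctuation relation holds at all times). -/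

import Mathlib

open Matrix BigOperators
open scoped ComplexOrder

noncomputable section

/-- `d×d` complex matrices. -/
abbrev Mat (d : ℕ) := Matrix (Fin d) (Fin d) ℂ

/-- The rank-one matrix `|u⟩⟨w|`. -/
def ketbra {d : ℕ} (u w : Fin d → ℂ) : Mat d := Matrix.vecMulVec u (star w)

/-- The matrix element `⟨u|A|w⟩`. -/
def matElem {d : ℕ} (u : Fin d → ℂ) (A : Mat d) (w : Fin d → ℂ) : ℂ :=
  star u ⬝ᵥ (A *ᵥ w)

/-- `v` is an orthonormal family. -/
def ONB {d : ℕ} (v : Fin d → Fin d → ℂ) : Prop :=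
  ∀ i j, star (v i) ⬝ᵥ v j = if i = j then 1 else 0

/-- The Gibbs population `p_m(β) = e^{-βE_m} / Σ_k e^{-βE_k}`. -/
def gibbsP {d : ℕ} (E : Fin d → ℝ) (β : ℝ) (m : Fin d) : ℝ :=
  Real.exp (-(β * E m)) / ∑ k, Real.exp (-(β * E k))

/-- The Gibbs state `ρ_β = e^{-βH}/Tr[e^{-βH}]`, written via the spectral
decomposition of `H` in its orthonormal eigenbasis `v`. -/
def gibbs {d : ℕ} (v : Fin d → Fin d → ℂ) (E : Fin d → ℝ) (β : ℝ) : Mat d :=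
  ∑ m, (gibbsP E β m : ℂ) • ketbra (v m) (v m)

/-- The positive matrix `Σ = Σ_m h_m |m⟩⟨m|` given by its spectral decomposition. -/
def specMat {d : ℕ} (v : Fin d → Fin d → ℂ) (h : Fin d → ℝ) : Mat d :=
  ∑ m, (h m : ℂ) • ketbra (v m) (v m)

/-- The real power `Σ^t` of the positive matrix `Σ = Σ_m h_m |m⟩⟨m|`,
defined via the spectral theorem. -/
def specPow {d : ℕ} (v : Fin d → Fin d → ℂ) (h : Fin d → ℝ) (t : ℝ) : Mat d :=
  ∑ m, ((h m ^ t : ℝ) : ℂ) • ketbra (v m) (v m)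

/-- The sesquilinear form `⟨⟨A,B⟩⟩_s = Tr[Σ^{1-s} A† Σ^s B]`. -/
def inn {d : ℕ} (v : Fin d → Fin d → ℂ) (h : Fin d → ℝ) (s : ℝ)
    (A B : Mat d) : ℂ :=
  (specPow v h (1 - s) * Aᴴ * specPow v h s * B).trace

attribute [local instance] Matrix.normedAddCommGroup Matrix.normedSpace

instance instIsTopologicalRingMatCLM (d : ℕ) : IsTopologicalRing (Mat d →L[ℂ] Mat d) := by
  let R : NormedRing (Mat d →L[ℂ] Mat d) := ContinuousLinearMap.toNormedRing
  exact NonUnitalSeminormedRing.toIsTopologicalRing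

/-!
The projectors `|n⟩⟨n|` commute with `H`, so `L♯_H` kills their span, which `L♯_D` preserves;
on this `L♯_D`-invariant subspace `L♯` and `L♯_D` agree, hence so do all their powers and their
exponentials. For the fluctuation relation, test the self-adjointness of a power `K` of `L♯_D`
on two diagonal projectors: since `Σ` is diagonal in the same basis and `K` preserves
adjoints, both sides become diagonal matrix elements, giving detailed balance
`p_m ⟨m|K[|n⟩⟨n|]|m⟩ = p_n ⟨n|K[|m⟩⟨m|]|n⟩` with the Gibbs weights `p`. Detailed balance is a
closed linear condition on `K`, so it passes to the exponential series of `τ L♯_D`, and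
`p_n / p_m = e^{-β_f (E_n - E_m)}`.
-/

open Nat NormedSpace

theorem iterate_symm_of_symm {α β : Type*} {b : α → α → β} {f : α → α}
    (h : ∀ x y, b x (f y) = b (f x) y) (n : ℕ) (x y : α) :
    b x (f^[n] y) = b (f^[n] x) y := by
  induction n generalizing y with
  | zero => rfl
  | succ n ih => rw [Function.iterate_succ_apply, ih, h, ← Function.iterate_succ_apply' f]

section Exp

variable {𝕜 E : Type*} [RCLike 𝕜] [NormedAddCommGroup E] [NormedSpace 𝕜 E] [CompleteSpace E]

theorem exp_apply_eq_tsum (A : E →L[𝕜] E) (x : E) :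
    exp A x = ∑' k : ℕ, (k !⁻¹ : 𝕜) • (A ^ k) x := by
  rw [exp_eq_tsum 𝕜]
  exact (ContinuousLinearMap.apply 𝕜 E x).map_tsum (expSeries_summable' A)

theorem exp_apply_eq_of_eqOn_of_mapsTo {A B : E →L[𝕜] E} {S : Set E} (hAB : Set.EqOn A B S)
    (hB : Set.MapsTo B S S) {x : E} (hx : x ∈ S) : exp A x = exp B x := by
  have hpow : ∀ k : ℕ, ∀ x ∈ S, (A ^ k) x = (B ^ k) x := by
    intro k
    induction k with
    | zero => exact fun _ _ => rfl
    | succ k ih =>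
      intro x hx
      rw [pow_succ, pow_succ, mul_apply_eq_comp, mul_apply_eq_comp, hAB hx, ih _ (hB hx)]
  simp only [exp_apply_eq_tsum, hpow _ _ hx]

end Exp

theorem exp_smul_mem_of_forall_pow_mem {𝕂 𝔸 : Type*} [Field 𝕂] [CharZero 𝕂] [Ring 𝔸]
    [Algebra 𝕂 𝔸] [TopologicalSpace 𝔸] [IsTopologicalRing 𝔸] {S : Submodule 𝕂 𝔸}
    (hS : IsClosed (S : Set 𝔸)) (c : 𝕂) {x : 𝔸} (hx : ∀ k : ℕ, x ^ k ∈ S) : exp (c • x) ∈ S := by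
  rw [exp_eq_tsum 𝕂]
  refine tsum_mem hS fun k => ?_
  rw [smul_pow, smul_smul]
  exact S.smul_mem _ (hx k)

section Ketbra

variable {d : ℕ}

theorem ketbra_conjTranspose (u w : Fin d → ℂ) : (ketbra u w)ᴴ = ketbra w u := by
  rw [ketbra, conjTranspose_vecMulVec, star_star, ketbra]

theorem ketbra_mul_ketbra (u w x y : Fin d → ℂ) :
    ketbra u w * ketbra x y = (star w ⬝ᵥ x) • ketbra u y := by
  rw [ketbra, ketbra, vecMulVec_mul_vecMulVec, vecMulVec_smul, ketbra]

theorem trace_ketbra_mul (u w : Fin d → ℂ) (X : Mat d) :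
    (ketbra u w * X).trace = matElem w X u := by
  rw [ketbra, vecMulVec_mul, trace_vecMulVec, dotProduct_comm, ← dotProduct_mulVec, matElem]

theorem mul_ketbra_eq_ketbra_mul_of_eigen {H : Mat d} (hH : H.IsHermitian) {u : Fin d → ℂ}
    {e : ℝ} (hu : H *ᵥ u = (e : ℂ) • u) : H * ketbra u u = ketbra u u * H := by
  have hstar : star u ᵥ* H = (e : ℂ) • star u := by
    rw [← hH.eq, ← star_mulVec, hu, star_smul, Complex.star_def, Complex.conj_ofReal]
  rw [ketbra, mul_vecMulVec, vecMulVec_mul, hu, hstar, smul_vecMulVec, vecMulVec_smul]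

end Ketbra

section Spectral

variable {d : ℕ} {v : Fin d → Fin d → ℂ} {h : Fin d → ℝ}

theorem specPow_mul_ketbra (hv : ONB v) (t : ℝ) (m : Fin d) (w : Fin d → ℂ) :
    specPow v h t * ketbra (v m) w = ((h m ^ t : ℝ) : ℂ) • ketbra (v m) w := by
  simp only [specPow, Finset.sum_mul, smul_mul_assoc, ketbra_mul_ketbra, hv _ _, ite_smul,
    one_smul, zero_smul, smul_ite, smul_zero, Finset.sum_ite_eq', Finset.mem_univ, if_true]

theorem ketbra_mul_specPow (hv : ONB v) (t : ℝ) (m : Fin d) (w : Fin d → ℂ) :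
    ketbra w (v m) * specPow v h t = ((h m ^ t : ℝ) : ℂ) • ketbra w (v m) := by
  simp only [specPow, Finset.mul_sum, mul_smul_comm, ketbra_mul_ketbra, hv _ _, ite_smul,
    one_smul, zero_smul, smul_ite, smul_zero, Finset.sum_ite_eq, Finset.mem_univ, if_true]

theorem inn_ketbra_left (hv : ONB v) (hh : ∀ m, 0 < h m) (s : ℝ) (m : Fin d) (X : Mat d) :
    inn v h s (ketbra (v m) (v m)) X = (h m : ℂ) * matElem (v m) X (v m) := by
  rw [inn, ketbra_conjTranspose, specPow_mul_ketbra hv, smul_mul_assoc, ketbra_mul_specPow hv,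
    smul_smul, smul_mul_assoc, trace_smul, trace_ketbra_mul, smul_eq_mul, ← Complex.ofReal_mul,
    ← Real.rpow_add (hh m), sub_add_cancel, Real.rpow_one]

theorem inn_ketbra_right (hv : ONB v) (hh : ∀ m, 0 < h m) (s : ℝ) (n : Fin d) (X : Mat d) :
    inn v h s X (ketbra (v n) (v n)) = (h n : ℂ) * matElem (v n) Xᴴ (v n) := by
  rw [inn, Matrix.mul_assoc (specPow v h (1 - s) * Xᴴ), specPow_mul_ketbra hv, mul_smul_comm,
    trace_smul, trace_mul_comm, ← Matrix.mul_assoc, ketbra_mul_specPow hv, smul_mul_assoc,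
    trace_smul, trace_ketbra_mul, smul_smul, smul_eq_mul, ← Complex.ofReal_mul,
    ← Real.rpow_add (hh n), add_sub_cancel, Real.rpow_one]

end Spectral

section DetailedBalance

variable {d : ℕ}

theorem matElem_add (u w : Fin d → ℂ) (X Y : Mat d) :
    matElem u (X + Y) w = matElem u X w + matElem u Y w := by
  rw [matElem, matElem, matElem, add_mulVec, dotProduct_add]

theorem matElem_smul (c : ℂ) (u w : Fin d → ℂ) (X : Mat d) :
    matElem u (c • X) w = c * matElem u X w := by
  rw [matElem, matElem, smul_mulVec, dotProduct_smul, smul_eq_mul]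

def detailedBalance (v : Fin d → Fin d → ℂ) (p : Fin d → ℝ) :
    Submodule ℂ (Mat d →L[ℂ] Mat d) where
  carrier := {K | ∀ m n, (p m : ℂ) * matElem (v m) (K (ketbra (v n) (v n))) (v m)
    = (p n : ℂ) * matElem (v n) (K (ketbra (v m) (v m))) (v n)}
  zero_mem' m n := by simp [matElem]
  add_mem' {K L} hK hL m n := by
    simp only [_root_.add_apply, matElem_add, mul_add, hK m n, hL m n]
  smul_mem' c K hK m n := by
    simp only [_root_.smul_apply, matElem_smul, mul_left_comm _ c, hK m n]

theorem isClosed_detailedBalance (v : Fin d → Fin d → ℂ) (p : Fin d → ℝ) :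
    IsClosed (detailedBalance v p : Set (Mat d →L[ℂ] Mat d)) :=
  Submodule.closed_of_finiteDimensional _

theorem mem_detailedBalance_of_symm {v : Fin d → Fin d → ℂ} (hv : ONB v) {p : Fin d → ℝ}
    (hp : ∀ m, 0 < p m) (s : ℝ) {K : Mat d →L[ℂ] Mat d}
    (hSelf : ∀ A B, inn v p s A (K B) = inn v p s (K A) B) (hAdj : ∀ A, (K A)ᴴ = K Aᴴ) :
    K ∈ detailedBalance v p := by
  intro m n
  rw [← inn_ketbra_left hv hp, hSelf, inn_ketbra_right hv hp, hAdj, ketbra_conjTranspose]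

theorem pow_mem_detailedBalance {v : Fin d → Fin d → ℂ} (hv : ONB v) {p : Fin d → ℝ}
    (hp : ∀ m, 0 < p m) (s : ℝ) {K : Mat d →L[ℂ] Mat d}
    (hSelf : ∀ A B, inn v p s A (K B) = inn v p s (K A) B) (hAdj : ∀ A, (K A)ᴴ = K Aᴴ)
    (k : ℕ) : K ^ k ∈ detailedBalance v p := by
  refine mem_detailedBalance_of_symm hv hp s (fun A B => ?_) (fun A => ?_)
  · simp only [pow_apply_eq_iterate]
    exact iterate_symm_of_symm hSelf k A B
  · simp only [pow_apply_eq_iterate]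
    exact ((Function.Commute.iterate_left (fun A => (hAdj A).symm) k) A).symm

theorem exp_smul_mem_detailedBalance {v : Fin d → Fin d → ℂ} (hv : ONB v) {p : Fin d → ℝ}
    (hp : ∀ m, 0 < p m) (s : ℝ) {K : Mat d →L[ℂ] Mat d}
    (hSelf : ∀ A B, inn v p s A (K B) = inn v p s (K A) B) (hAdj : ∀ A, (K A)ᴴ = K Aᴴ)
    (τ : ℝ) : exp (τ • K) ∈ detailedBalance v p := by
  rw [show τ • K = (τ : ℂ) • K from (Complex.coe_smul τ K).symm]
  exact exp_smul_mem_of_forall_pow_mem (isClosed_detailedBalance v p) _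
    (pow_mem_detailedBalance hv hp s hSelf hAdj)

end DetailedBalance

section Gibbs

variable {d : ℕ}

theorem gibbsP_pos (E : Fin d → ℝ) (β : ℝ) (m : Fin d) : 0 < gibbsP E β m :=
  div_pos (Real.exp_pos _) (Finset.sum_pos (fun _ _ => Real.exp_pos _) ⟨m, Finset.mem_univ m⟩)

theorem exp_mul_gibbsP (E : Fin d → ℝ) (β : ℝ) (m n : Fin d) :
    Real.exp (-(β * (E n - E m))) * gibbsP E β m = gibbsP E β n := by
  rw [gibbsP, gibbsP, ← mul_div_assoc, ← Real.exp_add]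
  ring_nf

variable {v : Fin d → Fin d → ℂ} {E : Fin d → ℝ} {β : ℝ}

theorem matElem_eq_exp_mul_of_mem_detailedBalance {K : Mat d →L[ℂ] Mat d}
    (hK : K ∈ detailedBalance v (gibbsP E β)) (m n : Fin d) :
    matElem (v m) (K (ketbra (v n) (v n))) (v m)
      = (Real.exp (-(β * (E n - E m))) : ℂ) * matElem (v n) (K (ketbra (v m) (v m))) (v n) := by
  apply mul_left_cancel₀ (Complex.ofReal_ne_zero.mpr (gibbsP_pos E β m).ne')
  rw [hK m n, ← exp_mul_gibbsP E β m n, Complex.ofReal_mul]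
  ring

end Gibbs

theorem exp_smul_add_apply_ketbra_self {d : ℕ} {H : Mat d} (hH : H.IsHermitian)
    {v : Fin d → Fin d → ℂ} {E : Fin d → ℝ} (hEig : ∀ m, H *ᵥ v m = (E m : ℂ) • v m)
    {LH LD : Mat d →L[ℂ] Mat d} (hLH : ∀ A : Mat d, LH A = Complex.I • (H * A - A * H))
    (hDiag : ∀ n, ∃ c : Fin d → ℂ, LD (ketbra (v n) (v n)) = ∑ m, c m • ketbra (v m) (v m))
    (τ : ℝ) (n : Fin d) :
    exp (τ • (LH + LD)) (ketbra (v n) (v n)) = exp (τ • LD) (ketbra (v n) (v n)) := by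
  let S := Submodule.span ℂ (Set.range fun n => ketbra (v n) (v n))
  have hLH_diag : S ≤ LinearMap.ker (LH : Mat d →ₗ[ℂ] Mat d) := Submodule.span_le.mpr <| by
    rintro _ ⟨n, rfl⟩
    simp only [SetLike.mem_coe, LinearMap.mem_ker, ContinuousLinearMap.coe_coe, hLH,
      mul_ketbra_eq_ketbra_mul_of_eigen hH (hEig n), sub_self, smul_zero]
  have hLD_diag : S ≤ S.comap (LD : Mat d →ₗ[ℂ] Mat d) := Submodule.span_le.mpr <| by
    rintro _ ⟨n, rfl⟩
    obtain ⟨c, hc⟩ := hDiag n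
    simp only [SetLike.mem_coe, Submodule.mem_comap, ContinuousLinearMap.coe_coe, hc]
    exact Submodule.sum_mem _ fun m _ => Submodule.smul_mem _ _ (Submodule.subset_span ⟨m, rfl⟩)
  refine exp_apply_eq_of_eqOn_of_mapsTo (fun X hX => ?_)
    (fun X hX => S.smul_of_tower_mem τ (hLD_diag hX)) (Submodule.subset_span ⟨n, rfl⟩)
  change τ • (LH X + LD X) = τ • LD X
  rw [show LH X = 0 from hLH_diag hX, zero_add]

theorem stmt19_general {d : ℕ} (H : Mat d) (hH : H.IsHermitian)
    (v : Fin d → Fin d → ℂ) (hv : ONB v) (E : Fin d → ℝ)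
    (hEig : ∀ m, H *ᵥ v m = (E m : ℂ) • v m) (βf : ℝ)
    (s : ℝ)
    (LH LD : Mat d →L[ℂ] Mat d)
    (hLH : ∀ A : Mat d, LH A = Complex.I • (H * A - A * H))
    (hSelf : ∀ A B : Mat d,
      inn v (gibbsP E βf) s A (LD B) = inn v (gibbsP E βf) s (LD A) B)
    (hAdj : ∀ A : Mat d, (LD A)ᴴ = LD Aᴴ)
    (hDiag : ∀ n, ∃ c : Fin d → ℂ,
      LD (ketbra (v n) (v n)) = ∑ m, c m • ketbra (v m) (v m)) :
    ∀ τ : ℝ, 0 ≤ τ →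
      (∀ n, (NormedSpace.exp (τ • (LH + LD))) (ketbra (v n) (v n))
          = (NormedSpace.exp (τ • LD)) (ketbra (v n) (v n))) ∧
      (∀ m n,
        matElem (v m) ((NormedSpace.exp (τ • (LH + LD))) (ketbra (v n) (v n))) (v m)
          = (Real.exp (-(βf * (E n - E m))) : ℂ) *
            matElem (v n) ((NormedSpace.exp (τ • (LH + LD))) (ketbra (v m) (v m))) (v n)) := by
  intro τ _
  have hfix := exp_smul_add_apply_ketbra_self hH hEig hLH hDiag τ
  refine ⟨hfix, fun m n => ?_⟩
  rw [hfix, hfix]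
  exact matElem_eq_exp_mul_of_mem_detailedBalance
    (exp_smul_mem_detailedBalance hv (gibbsP_pos E βf) s hSelf hAdj τ) m n

/-- if `L♯ = L♯_H + L♯_D` with `L♯_H = i[H,·]`, where `L♯_D` is
self-adjoint and adjoint-preserving with respect to `⟨⟨·,·⟩⟩_s` (reference state
`Σ = ρ_{β_f}`, the Gibbs state of `H`) and maps each diagonal projector `|n⟩⟨n|` into
the span of the `|m⟩⟨m|`, then `e^{τL♯}[|n⟩⟨n|] = e^{τL♯_D}[|n⟩⟨n|]` for all `τ ≥ 0`,
and consequently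
`⟨m|e^{τL♯}[|n⟩⟨n|]|m⟩ = e^{-β_f(E_n-E_m)} ⟨n|e^{τL♯}[|m⟩⟨m|]|n⟩` for all `m`, `n`, `τ`
(so the quantum fluctuation relation holds at all times). -/
theorem stmt19 {d : ℕ} (H : Mat d) (hH : H.IsHermitian)
    (v : Fin d → Fin d → ℂ) (hv : ONB v) (E : Fin d → ℝ)
    (hEig : ∀ m, H *ᵥ v m = (E m : ℂ) • v m) (βf : ℝ)
    (s : ℝ) (hs : s ∈ Set.Icc (0:ℝ) 1)
    (LH LD : Mat d →L[ℂ] Mat d)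
    (hLH : ∀ A : Mat d, LH A = Complex.I • (H * A - A * H))
    (hSelf : ∀ A B : Mat d,
      inn v (gibbsP E βf) s A (LD B) = inn v (gibbsP E βf) s (LD A) B)
    (hAdj : ∀ A : Mat d, (LD A)ᴴ = LD Aᴴ)
    (hDiag : ∀ n, ∃ c : Fin d → ℂ,
      LD (ketbra (v n) (v n)) = ∑ m, c m • ketbra (v m) (v m)) :
    ∀ τ : ℝ, 0 ≤ τ →
      (∀ n, (NormedSpace.exp (τ • (LH + LD))) (ketbra (v n) (v n))
          = (NormedSpace.exp (τ • LD)) (ketbra (v n) (v n))) ∧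
      (∀ m n,
        matElem (v m) ((NormedSpace.exp (τ • (LH + LD))) (ketbra (v n) (v n))) (v m)
          = (Real.exp (-(βf * (E n - E m))) : ℂ) *
            matElem (v n) ((NormedSpace.exp (τ • (LH + LD))) (ketbra (v m) (v m))) (v n)) :=
  stmt19_general H hH v hv E hEig βf s LH LD hLH hSelf hAdj hDiag
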